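/- Let α, β ∈ (0, 0.1) and let C be a concept class over a finite domain X. Suppose there exists a learner A (using public randomness) that is m-sample (α, β/3)-accurate (0.9, 1−β/3)-pseudo-globally stable for C, and that each public random string r determines a hypothesis class H_r with log₂|H_r| ≤ d such that A(·; r) always outputs an element of H_r. Then for any ε ∈ (0,1), there exists an ε-differentially private (α,β)-accurate user-level learner for C in the central model that uses n = ⌈K·(d + log(1/β))/ε⌉ users for a universal constant K, where each user holds m i.i.d. samples. -/

import Mathlib

/-!
Each user runs the stable learner on its own sample with the shared random string `r`, and the
curator releases a hypothesis of `H_r` by the exponential mechanism (weight `exp (ε/2 · score)`)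
scored by the number of users voting for it. Changing one user's data moves every score by at
most one, so the output is `ε`-DP. For all `r` outside a set of probability `2β/3`, every vote
equals the canonical hypothesis `h_r` with probability at least `0.9`; Markov's inequality for
`8 ^ #(wrong votes)` shows that, except with probability `0.85 ^ n ≤ β²`, two thirds of the votes
go to `h_r`, and then the exponential mechanism misses `h_r` with probability at most
`2 ^ d * exp (-ε n / 6) ≤ β²`.
-/

open scoped ENNReal

noncomputable section

def pmfPi {β : Type*} : {n : ℕ} → (Fin n → PMF β) → PMF (Fin n → β)
  | 0, _ => PMF.pure Fin.elim0
  | _ + 1, p => (p 0).bind fun b => (pmfPi fun i => p i.succ).bind fun f => PMF.pure (Fin.cons b f)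

def iidPMF {Z : Type*} (D : PMF Z) (m : ℕ) : PMF (Fin m → Z) := pmfPi fun _ => D

def pr {α : Type*} (p : PMF α) (s : Set α) : ℝ≥0∞ := p.toOuterMeasure s

def errD {X : Type*} (D : PMF (X × Bool)) (h : X → Bool) : ℝ≥0∞ := pr D {z | h z.1 ≠ z.2}

def Realizable {X : Type*} (C : Set (X → Bool)) (D : PMF (X × Bool)) : Prop :=
  ∃ f ∈ C, errD D f = 0

/-- neighboring fixed-size datasets: the entire data of (at most) one user is changed -/
def FnNeighbor {n : ℕ} {A : Type*} (u u' : Fin n → A) : Prop :=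
  ∃ i, ∀ j, j ≠ i → u j = u' j

/-- (ε,δ)-DP for mechanisms on fixed-size datasets. -/
def DPfn {n : ℕ} {A O : Type*} (M : (Fin n → A) → PMF O) (ε δ : ℝ) : Prop :=
  ∀ u u', FnNeighbor u u' → ∀ S : Set O,
    pr (M u) S ≤ ENNReal.ofReal (Real.exp ε) * pr (M u') S + ENNReal.ofReal δ

/-- `A` is an m-sample (α,β)-accurate (η,ν)-pseudo-globally stable learner for `C`
with public randomness `ρ`. -/
def PGStable {X R : Type*} (m : ℕ) (α β η ν : ℝ) (C : Set (X → Bool))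
    (ρ : PMF R) (A : (Fin m → X × Bool) → R → PMF (X → Bool)) : Prop :=
  ∀ D : PMF (X × Bool), Realizable C D →
    ∃ hr : R → (X → Bool),
      pr ρ {r | errD D (hr r) ≤ ENNReal.ofReal α} ≥ ENNReal.ofReal (1 - β) ∧
      pr ρ {r | pr ((iidPMF D m).bind fun S => A S r) {h | h = hr r} ≥ ENNReal.ofReal η}
        ≥ ENNReal.ofReal ν

section Pr

variable {α β : Type*}

lemma pr_eq_tsum (p : PMF α) (s : Set α) : pr p s = ∑' x, s.indicator p x :=
  PMF.toOuterMeasure_apply p s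

lemma pr_singleton (p : PMF α) (a : α) : pr p {a} = p a :=
  PMF.toOuterMeasure_apply_singleton p a

lemma pr_bind (p : PMF α) (f : α → PMF β) (s : Set β) :
    pr (p.bind f) s = ∑' a, p a * pr (f a) s :=
  PMF.toOuterMeasure_bind_apply p f s

lemma pr_mono (p : PMF α) {s t : Set α} (h : s ⊆ t) : pr p s ≤ pr p t :=
  MeasureTheory.measure_mono h

lemma pr_union_le (p : PMF α) (s t : Set α) : pr p (s ∪ t) ≤ pr p s + pr p t :=
  MeasureTheory.measure_union_le s t

lemma pr_compl_add (p : PMF α) (s : Set α) : pr p sᶜ + pr p s = 1 := by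
  rw [pr_eq_tsum, pr_eq_tsum, ← ENNReal.tsum_add]
  simp only [Set.indicator_compl_add_self_apply, PMF.tsum_coe]

lemma pr_le_one (p : PMF α) (s : Set α) : pr p s ≤ 1 :=
  pr_compl_add p s ▸ le_add_self

lemma pr_compl_le {p : PMF α} {s : Set α} {x : ℝ} (h : ENNReal.ofReal (1 - x) ≤ pr p s) :
    pr p sᶜ ≤ ENNReal.ofReal x := by
  have h1 : pr p sᶜ + pr p s ≤ ENNReal.ofReal x + pr p s :=
    calc pr p sᶜ + pr p s = ENNReal.ofReal (x + (1 - x)) := by rw [pr_compl_add]; norm_num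
      _ ≤ ENNReal.ofReal x + ENNReal.ofReal (1 - x) := ENNReal.ofReal_add_le
      _ ≤ ENNReal.ofReal x + pr p s := by gcongr
  exact (ENNReal.add_le_add_iff_right (ne_top_of_le_ne_top ENNReal.one_ne_top
    (pr_le_one p s))).1 h1

lemma le_pr_of_pr_compl_le {p : PMF α} {s : Set α} {x : ℝ} (hx : 0 ≤ x)
    (h : pr p sᶜ ≤ ENNReal.ofReal x) : ENNReal.ofReal (1 - x) ≤ pr p s := by
  rw [ENNReal.ofReal_sub _ hx, ENNReal.ofReal_one, ← pr_compl_add p s]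
  exact tsub_le_iff_right.2 (by rw [add_comm]; gcongr)

/-- Markov's inequality. -/
lemma pr_mul_le_tsum (p : PMF α) {s : Set α} {a : ℝ≥0∞} {G : α → ℝ≥0∞}
    (h : ∀ x ∈ s, a ≤ G x) : pr p s * a ≤ ∑' x, p x * G x := by
  rw [pr_eq_tsum, ← ENNReal.tsum_mul_right]
  refine ENNReal.tsum_le_tsum fun x => ?_
  by_cases hx : x ∈ s
  · rw [Set.indicator_of_mem hx]; gcongr; exact h x hx
  · simp [hx]

lemma tsum_bind_mul (p : PMF α) (f : α → PMF β) (G : β → ℝ≥0∞) :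
    ∑' y, p.bind f y * G y = ∑' x, p x * ∑' y, f x y * G y := by
  simp only [PMF.bind_apply, ← ENNReal.tsum_mul_right, ← ENNReal.tsum_mul_left, mul_assoc]
  exact ENNReal.tsum_comm

lemma tsum_pure_mul (a : α) (G : α → ℝ≥0∞) : ∑' x, PMF.pure a x * G x = G a := by
  classical
  simp [PMF.pure_apply]

lemma pr_bind_le_mul_pr_bind {p : PMF α} {f g : α → PMF β} {s : Set β} {c : ℝ≥0∞}
    (h : ∀ a, pr (f a) s ≤ c * pr (g a) s) : pr (p.bind f) s ≤ c * pr (p.bind g) s := by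
  rw [pr_bind, pr_bind, ← ENNReal.tsum_mul_left]
  exact ENNReal.tsum_le_tsum fun a => by rw [mul_left_comm]; gcongr; exact h a

lemma le_mul_pr_bind {p : PMF α} {f : α → PMF β} {s : Set β} {x c : ℝ≥0∞}
    (h : ∀ a ∈ p.support, x ≤ c * pr (f a) s) : x ≤ c * pr (p.bind f) s := by
  rw [pr_bind, ← ENNReal.tsum_mul_left]
  calc x = ∑' a, p a * x := by rw [ENNReal.tsum_mul_right, PMF.tsum_coe, one_mul]
    _ ≤ _ := ENNReal.tsum_le_tsum fun a => by
      by_cases ha : a ∈ p.support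
      · rw [mul_left_comm]; gcongr; exact h a ha
      · simp [(PMF.mem_support_iff p a).not_left.1 ha]

lemma pr_le_mul_pr_of_le {p q : PMF α} {c : ℝ≥0∞} (h : ∀ a, p a ≤ c * q a) (s : Set α) :
    pr p s ≤ c * pr q s := by
  rw [pr_eq_tsum, pr_eq_tsum, ← ENNReal.tsum_mul_left]
  refine ENNReal.tsum_le_tsum fun a => ?_
  by_cases ha : a ∈ s <;> simp [ha, h a]

lemma pr_bind_le_add {p : PMF α} {f : α → PMF β} {s : Set β} {T : Set α} {c : ℝ≥0∞}
    (h : ∀ a ∉ T, pr (f a) s ≤ c) : pr (p.bind f) s ≤ pr p T + c := by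
  rw [pr_bind, pr_eq_tsum]
  calc ∑' a, p a * pr (f a) s ≤ ∑' a, (T.indicator p a + p a * c) :=
        ENNReal.tsum_le_tsum fun a => by
          by_cases ha : a ∈ T
          · rw [Set.indicator_of_mem ha]
            exact le_add_right (mul_le_of_le_one_right' (pr_le_one _ _))
          · rw [Set.indicator_of_notMem ha, zero_add]; gcongr; exact h a ha
    _ = ∑' a, T.indicator p a + c := by
        rw [ENNReal.tsum_add, ENNReal.tsum_mul_right, PMF.tsum_coe, one_mul]

lemma pr_le_card_mul {p : PMF α} {H : Finset α} {s : Set α} {c : ℝ≥0∞}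
    (hp : ∀ a ∉ H, p a = 0) (h : ∀ a ∈ H, a ∈ s → p a ≤ c) : pr p s ≤ H.card * c := by
  rw [pr_eq_tsum, tsum_eq_sum (s := H) fun a ha => by simp [hp a ha]]
  calc ∑ a ∈ H, s.indicator p a ≤ ∑ _a ∈ H, c := Finset.sum_le_sum fun a ha => by
        by_cases has : a ∈ s
        · rw [Set.indicator_of_mem has]; exact h a ha has
        · simp [has]
    _ = H.card * c := by rw [Finset.sum_const, nsmul_eq_mul]

end Pr

section Pi

variable {A B O : Type*}

lemma tsum_pmfPi_mul_prod : ∀ {n : ℕ} (P : Fin n → PMF B) (g : Fin n → B → ℝ≥0∞),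
    ∑' v, pmfPi P v * ∏ i, g i (v i) = ∏ i, ∑' b, P i b * g i b
  | 0, P, g => by
    rw [pmfPi]
    simp only [Finset.univ_eq_empty, Finset.prod_empty, mul_one, PMF.tsum_coe]
  | n + 1, P, g => by
    rw [pmfPi]
    simp only [tsum_bind_mul, tsum_pure_mul, Fin.prod_univ_succ, Fin.cons_zero, Fin.cons_succ]
    simp_rw [mul_left_comm _ (g 0 _), ENNReal.tsum_mul_left,
      tsum_pmfPi_mul_prod (fun i => P i.succ), ← mul_assoc]
    exact ENNReal.tsum_mul_right

lemma pmfPi_apply {n : ℕ} (P : Fin n → PMF B) (w : Fin n → B) : pmfPi P w = ∏ i, P i (w i) := by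
  have hpure : ∀ v : Fin n → B, ∏ i, PMF.pure (w i) (v i) = PMF.pure w v := by
    classical
    intro v
    by_cases hv : v = w
    · simp [hv]
    · obtain ⟨i, hi⟩ := Function.ne_iff.1 hv
      rw [PMF.pure_apply_of_ne _ _ hv]
      exact Finset.prod_eq_zero (Finset.mem_univ i) (PMF.pure_apply_of_ne _ _ hi)
  have h := tsum_pmfPi_mul_prod P fun i => PMF.pure (w i)
  simp only [hpure, mul_comm (P _ _), mul_comm (pmfPi P _), tsum_pure_mul] at h
  exact h

lemma mem_support_pmfPi {n : ℕ} {P : Fin n → PMF B} {w : Fin n → B} :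
    w ∈ (pmfPi P).support ↔ ∀ i, w i ∈ (P i).support := by
  simp [PMF.mem_support_iff, pmfPi_apply, Finset.prod_ne_zero_iff]

lemma pmfPi_bind_pmfPi {n : ℕ} (P : Fin n → PMF A) (F : Fin n → A → PMF B) :
    (pmfPi P).bind (fun u => pmfPi fun i => F i (u i)) = pmfPi fun i => (P i).bind (F i) := by
  ext w
  have h := tsum_pmfPi_mul_prod P fun i a => F i a (w i)
  simp only [pmfPi_apply] at h
  simpa only [PMF.bind_apply, pmfPi_apply] using h

lemma pr_pmfPi_bind_le_mul {n : ℕ} {P P' : Fin n → PMF B} (i : Fin n)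
    (hPP' : ∀ j ≠ i, P j = P' j) {f : (Fin n → B) → PMF O} {s : Set O} {c : ℝ≥0∞}
    (hf : ∀ v w, (∀ j ≠ i, v j = w j) → pr (f v) s ≤ c * pr (f w) s) :
    pr ((pmfPi P).bind f) s ≤ c * pr ((pmfPi P').bind f) s := by
  classical
  -- resampling coordinate `i` from `P' i` turns `pmfPi P` into `pmfPi P'`, moving `v` only to
  -- vectors that agree with `v` off `i`
  let F : Fin n → B → PMF B := fun j b => if j = i then P' i else PMF.pure b
  have hresample : (pmfPi P).bind (fun v => pmfPi fun j => F j (v j)) = pmfPi P' := by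
    rw [pmfPi_bind_pmfPi]
    congr 1; funext j
    by_cases hj : j = i
    · subst hj; simp [F, PMF.bind_const]
    · simp only [F, if_neg hj, PMF.bind_pure, hPP' j hj]
  rw [← hresample, PMF.bind_bind]
  refine pr_bind_le_mul_pr_bind fun v => le_mul_pr_bind fun w hw => hf v w fun j hj => ?_
  have hwj := mem_support_pmfPi.1 hw j
  simp only [F, if_neg hj, PMF.support_pure, Set.mem_singleton_iff] at hwj
  exact hwj.symm

end Pi

section ExpMech

open Finset Real

variable {B : Type*} [DecidableEq B] {n : ℕ}

def voteCount (v : Fin n → B) (b : B) : ℕ := #{i | v i = b}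

lemma voteCount_le_add_one {v w : Fin n → B} {i : Fin n} (h : ∀ j ≠ i, v j = w j) (b : B) :
    voteCount v b ≤ voteCount w b + 1 :=
  calc #{j | v j = b} ≤ #(insert i ({j | w j = b} : Finset (Fin n))) :=
        card_le_card fun j hj => by
          by_cases hji : j = i
          · simp [hji]
          · simp_all
    _ ≤ #{j | w j = b} + 1 := card_insert_le _ _

lemma voteCount_add_card_ne (v : Fin n → B) (b : B) : voteCount v b + #{i | v i ≠ b} = n := by
  rw [voteCount, card_filter_add_card_filter_not, card_univ, Fintype.card_fin]

lemma voteCount_le_card_ne (v : Fin n → B) {b b' : B} (h : b ≠ b') :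
    voteCount v b ≤ #{i | v i ≠ b'} :=
  card_le_card fun i hi => by simp_all

lemma exp_mul_voteCount_le {ε : ℝ} (hε : 0 ≤ ε) {v w : Fin n → B} {i : Fin n}
    (h : ∀ j ≠ i, v j = w j) (b : B) :
    exp (ε * voteCount v b) ≤ exp ε * exp (ε * voteCount w b) := by
  have hcount : (voteCount v b : ℝ) ≤ voteCount w b + 1 := by
    exact_mod_cast voteCount_le_add_one h b
  rw [← exp_add, exp_le_exp]
  nlinarith

def expMechNorm (H : Finset B) (ε : ℝ) (v : Fin n → B) : ℝ := ∑ b ∈ H, exp (ε * voteCount v b)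

lemma expMechNorm_pos {H : Finset B} (hH : H.Nonempty) (ε : ℝ) (v : Fin n → B) :
    0 < expMechNorm H ε v :=
  sum_pos (fun _ _ => exp_pos _) hH

def expMech [Inhabited B] (H : Finset B) (ε : ℝ) (v : Fin n → B) : PMF B :=
  if hH : H.Nonempty then
    PMF.ofFinset
      (fun b => if b ∈ H then ENNReal.ofReal (exp (ε * voteCount v b) / expMechNorm H ε v) else 0) H
      (by
        rw [sum_congr rfl fun b hb => if_pos hb, ← ENNReal.ofReal_sum_of_nonneg fun b _ =>
          div_nonneg (exp_pos _).le (expMechNorm_pos hH ε v).le, ← sum_div]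
        exact (congrArg ENNReal.ofReal (div_self (expMechNorm_pos hH ε v).ne')).trans
          ENNReal.ofReal_one)
      fun _ hb => if_neg hb
  else PMF.pure default

variable [Inhabited B] {H : Finset B} {ε : ℝ}

lemma expMech_apply_of_mem {b : B} (hb : b ∈ H) (v : Fin n → B) :
    expMech H ε v b = ENNReal.ofReal (exp (ε * voteCount v b) / expMechNorm H ε v) := by
  rw [expMech, dif_pos ⟨b, hb⟩, PMF.ofFinset_apply, if_pos hb]

lemma expMech_apply_of_notMem (hH : H.Nonempty) {b : B} (hb : b ∉ H) (v : Fin n → B) :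
    expMech H ε v b = 0 := by
  rw [expMech, dif_pos hH, PMF.ofFinset_apply, if_neg hb]

lemma expMech_le_exp_mul (hε : 0 ≤ ε) {v w : Fin n → B} {i : Fin n} (h : ∀ j ≠ i, v j = w j)
    (b : B) : expMech H ε v b ≤ ENNReal.ofReal (exp (2 * ε)) * expMech H ε w b := by
  by_cases hH : H.Nonempty
  · by_cases hb : b ∈ H
    · rw [expMech_apply_of_mem hb, expMech_apply_of_mem hb, ← ENNReal.ofReal_mul (exp_pos _).le]
      refine ENNReal.ofReal_le_ofReal ?_
      have hnorm : expMechNorm H ε w ≤ exp ε * expMechNorm H ε v := by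
        rw [expMechNorm, expMechNorm, mul_sum]
        exact sum_le_sum fun b _ => exp_mul_voteCount_le hε (fun j hj => (h j hj).symm) b
      calc exp (ε * voteCount v b) / expMechNorm H ε v
          ≤ exp ε * exp (ε * voteCount w b) / (expMechNorm H ε w / exp ε) :=
            div_le_div₀ (by positivity) (exp_mul_voteCount_le hε h b)
              (div_pos (expMechNorm_pos hH ε w) (exp_pos ε))
              (by rw [div_le_iff₀ (exp_pos ε)]; linarith)
        _ = exp (2 * ε) * (exp (ε * voteCount w b) / expMechNorm H ε w) := by
            rw [two_mul, exp_add]; field_simp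
    · simp [expMech_apply_of_notMem hH hb]
  · simp only [expMech, dif_neg hH]
    exact le_mul_of_one_le_left zero_le (ENNReal.one_le_ofReal.2 (one_le_exp (by linarith)))

lemma expMech_apply_le {b' : B} (hb' : b' ∈ H) (v : Fin n → B) (b : B) :
    expMech H ε v b ≤ ENNReal.ofReal (exp (ε * (voteCount v b - voteCount v b'))) := by
  by_cases hb : b ∈ H
  · rw [expMech_apply_of_mem hb]
    refine ENNReal.ofReal_le_ofReal ?_
    rw [mul_sub, exp_sub]
    exact div_le_div_of_nonneg_left (exp_pos _).le (exp_pos _)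
      (single_le_sum (fun b _ => (exp_pos (ε * voteCount v b)).le) hb')
  · rw [expMech_apply_of_notMem ⟨b', hb'⟩ hb]
    exact zero_le

lemma pr_expMech_compl_le {b : B} (hb : b ∈ H) (hε : 0 ≤ ε) {v : Fin n → B}
    (hv : 3 * #{i | v i ≠ b} ≤ n) :
    pr (expMech H ε v) {b}ᶜ ≤ H.card * ENNReal.ofReal (exp (-(ε * n / 3))) := by
  refine pr_le_card_mul (fun a ha => expMech_apply_of_notMem ⟨b, hb⟩ ha v) fun a _ ha => ?_
  refine (expMech_apply_le hb v a).trans (ENNReal.ofReal_le_ofReal (exp_le_exp.2 ?_))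
  have htotal : (voteCount v b : ℝ) + #{i | v i ≠ b} = n := by
    exact_mod_cast voteCount_add_card_ne v b
  have hother : (voteCount v a : ℝ) ≤ #{i | v i ≠ b} := by
    exact_mod_cast voteCount_le_card_ne v ha
  have hmajority : (3 * #{i | v i ≠ b} : ℝ) ≤ n := by exact_mod_cast hv
  nlinarith

end ExpMech

section Voting

open Finset Real

variable {B : Type*} [DecidableEq B]

lemma pr_iidPMF_card_ne_gt_le (p : PMF B) {b : B} (hp : ENNReal.ofReal 0.9 ≤ p b) (n : ℕ) :
    pr (iidPMF p n) {v | n < 3 * #{i | v i ≠ b}} ≤ ENNReal.ofReal (0.85 ^ n) := by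
  let g : B → ℝ≥0∞ := fun x => if x = b then 1 else 8
  have hmean : ∑' x, p x * g x ≤ ENNReal.ofReal 1.7 := by
    have hsplit : ∀ x, p x * g x = p x + 7 * ({b}ᶜ : Set B).indicator p x := by
      intro x
      by_cases hx : x = b
      · simp [g, hx]
      · simp only [g, if_neg hx, Set.indicator_of_mem (Set.mem_compl_singleton_iff.2 hx)]
        ring
    have hfail : pr p {b}ᶜ ≤ ENNReal.ofReal 0.1 :=
      pr_compl_le (by rw [pr_singleton]; norm_num at hp ⊢; exact hp)
    calc ∑' x, p x * g x = 1 + 7 * pr p {b}ᶜ := by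
          simp only [hsplit, ENNReal.tsum_add, ENNReal.tsum_mul_left, PMF.tsum_coe, pr_eq_tsum]
      _ ≤ 1 + 7 * ENNReal.ofReal 0.1 := by gcongr
      _ = ENNReal.ofReal 1.7 := by
          rw [← ENNReal.ofReal_ofNat 7, ← ENNReal.ofReal_mul (by norm_num), ← ENNReal.ofReal_one,
            ← ENNReal.ofReal_add (by norm_num) (by norm_num)]
          norm_num
  have hmarkov : pr (iidPMF p n) {v | n < 3 * #{i | v i ≠ b}} * 2 ^ n
      ≤ ∑' v, iidPMF p n v * ∏ i, g (v i) := by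
    refine pr_mul_le_tsum _ fun v hv => ?_
    have hprod : ∏ i, g (v i) = 8 ^ #{i | v i ≠ b} := by simp [g, prod_ite]
    rw [hprod, show (8 : ℝ≥0∞) = 2 ^ 3 by norm_num, ← pow_mul]
    exact pow_le_pow_right₀ (by norm_num) (le_of_lt hv)
  have hmgf : ∑' v, iidPMF p n v * ∏ i, g (v i) = (∑' x, p x * g x) ^ n := by
    rw [iidPMF, tsum_pmfPi_mul_prod, prod_const, card_univ, Fintype.card_fin]
  refine (ENNReal.mul_le_mul_iff_left (pow_ne_zero n two_ne_zero)
    (ENNReal.pow_ne_top ENNReal.ofNat_ne_top)).1 ?_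
  calc _ ≤ ENNReal.ofReal 1.7 ^ n := hmarkov.trans (hmgf ▸ by gcongr)
    _ = ENNReal.ofReal (0.85 ^ n) * 2 ^ n := by
        rw [← ENNReal.ofReal_ofNat 2, ← ENNReal.ofReal_pow (by norm_num),
          ← ENNReal.ofReal_pow (by norm_num), ← ENNReal.ofReal_mul (by positivity), ← mul_pow]
        norm_num

lemma pr_iidPMF_bind_expMech_compl_le [Inhabited B] (p : PMF B) {H : Finset B} {b : B}
    (hb : b ∈ H) (hp : ENNReal.ofReal 0.9 ≤ p b) {ε : ℝ} (hε : 0 ≤ ε) (n : ℕ) :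
    pr ((iidPMF p n).bind (expMech H ε)) {b}ᶜ
      ≤ ENNReal.ofReal (0.85 ^ n + H.card * exp (-(ε * n / 3))) := by
  rw [ENNReal.ofReal_add (by positivity) (by positivity), ENNReal.ofReal_mul (by positivity),
    ENNReal.ofReal_natCast]
  refine (pr_bind_le_add fun v hv => pr_expMech_compl_le hb hε (not_lt.1 hv)).trans ?_
  gcongr
  exact pr_iidPMF_card_ne_gt_le p hp n

lemma exp_neg_le_sq {β x : ℝ} (hβ : 0 < β) (hx : 2 * log (1 / β) ≤ x) : exp (-x) ≤ β ^ 2 :=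
  calc exp (-x) ≤ exp (2 * log β) := exp_le_exp.2 (by rw [one_div, log_inv] at hx; linarith)
    _ = β ^ 2 := by rw [two_mul, exp_add, exp_log hβ, sq]

lemma pow_add_mul_exp_neg_le {β d ε c : ℝ} {n : ℕ} (hβ0 : 0 < β) (hβ : β ≤ 1 / 6) (hd : 0 ≤ d)
    (hε : ε ≤ 1) (hc : c ≤ 2 ^ d) (hn : 20 * (d + log (1 / β)) ≤ ε * n) :
    0.85 ^ n + c * exp (-(ε / 2 * n / 3)) ≤ β / 3 := by
  have hL : 0 ≤ log (1 / β) := log_nonneg (by rw [le_div_iff₀ hβ0]; linarith)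
  have hεn : ε * n ≤ n := by nlinarith [n.cast_nonneg (α := ℝ)]
  have htail : (0.85 : ℝ) ^ n ≤ β ^ 2 :=
    calc (0.85 : ℝ) ^ n ≤ exp (-0.15) ^ n :=
          pow_le_pow_left₀ (by norm_num) (by linarith [add_one_le_exp (-0.15 : ℝ)]) n
      _ = exp (-(0.15 * n)) := by rw [← exp_nat_mul]; ring_nf
      _ ≤ β ^ 2 := exp_neg_le_sq hβ0 (by linarith)
  have hpow : (2 : ℝ) ^ d ≤ exp d := by
    rw [rpow_def_of_pos two_pos, exp_le_exp]
    nlinarith [log_two_lt_d9]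
  have hem : c * exp (-(ε / 2 * n / 3)) ≤ β ^ 2 :=
    calc c * exp (-(ε / 2 * n / 3)) ≤ exp d * exp (-(ε / 2 * n / 3)) := by gcongr; linarith
      _ = exp (-(ε * n / 6 - d)) := by rw [← exp_add]; ring_nf
      _ ≤ β ^ 2 := exp_neg_le_sq hβ0 (by linarith)
  nlinarith

end Voting

section VoteMech

variable {Z R B : Type*} [DecidableEq B] [Inhabited B]

def voteMech {n : ℕ} (ρ : PMF R) (A : Z → R → PMF B) (H : R → Finset B) (ε : ℝ)
    (u : Fin n → Z) : PMF B :=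
  ρ.bind fun r => (pmfPi fun i => A (u i) r).bind (expMech (H r) (ε / 2))

theorem dpfn_voteMech {n : ℕ} (ρ : PMF R) (A : Z → R → PMF B) (H : R → Finset B) {ε : ℝ}
    (hε : 0 ≤ ε) : DPfn (voteMech (n := n) ρ A H ε) ε 0 := by
  rintro u u' ⟨i, hi⟩ S
  rw [ENNReal.ofReal_zero, add_zero]
  refine pr_bind_le_mul_pr_bind fun r => pr_pmfPi_bind_le_mul i (fun j hj => by rw [hi j hj])
    fun v w hvw => pr_le_mul_pr_of_le (fun b => ?_) S
  have h := expMech_le_exp_mul (H := H r) (by linarith : 0 ≤ ε / 2) hvw b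
  rwa [mul_div_cancel₀ _ two_ne_zero] at h

lemma iidPMF_bind_voteMech (Dz : PMF Z) (n : ℕ) (ρ : PMF R) (A : Z → R → PMF B)
    (H : R → Finset B) (ε : ℝ) :
    (iidPMF Dz n).bind (voteMech ρ A H ε)
      = ρ.bind fun r => (iidPMF (Dz.bind fun z => A z r) n).bind (expMech (H r) (ε / 2)) := by
  unfold voteMech
  rw [PMF.bind_comm]
  congr 1
  funext r
  rw [← PMF.bind_bind, iidPMF, iidPMF, pmfPi_bind_pmfPi (fun _ => Dz) fun _ z => A z r]

theorem le_pr_iidPMF_bind_voteMech (Dz : PMF Z) {ρ : PMF R} {A : Z → R → PMF B}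
    {H : R → Finset B} {good : Set B} {hr : R → B}
    {β d ε : ℝ} {n : ℕ} (hβ : β ∈ Set.Ioo (0 : ℝ) 0.1) (hd : 0 ≤ d) (hε : ε ∈ Set.Ioo (0 : ℝ) 1)
    (hn : 20 * (d + Real.log (1 / β)) ≤ ε * n) (hcard : ∀ r, ((H r).card : ℝ) ≤ 2 ^ d)
    (hsupp : ∀ r z, ∀ h ∈ (A z r).support, h ∈ H r)
    (hacc : pr ρ {r | hr r ∈ good} ≥ ENNReal.ofReal (1 - β / 3))
    (hstab : pr ρ {r | pr (Dz.bind fun z => A z r) {h | h = hr r} ≥ ENNReal.ofReal 0.9}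
      ≥ ENNReal.ofReal (1 - β / 3)) :
    ENNReal.ofReal (1 - β) ≤ pr ((iidPMF Dz n).bind (voteMech ρ A H ε)) good := by
  obtain ⟨hβ0, hβ1⟩ := hβ
  rw [iidPMF_bind_voteMech]
  refine le_pr_of_pr_compl_le hβ0.le ?_
  set G := {r | hr r ∈ good} ∩
    {r | pr (Dz.bind fun z => A z r) {h | h = hr r} ≥ ENNReal.ofReal 0.9}
  have hbad : pr ρ Gᶜ ≤ ENNReal.ofReal (β / 3) + ENNReal.ofReal (β / 3) := by
    rw [Set.compl_inter]
    exact (pr_union_le _ _ _).trans (add_le_add (pr_compl_le hacc) (pr_compl_le hstab))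
  have hgood : ∀ r ∈ G, pr ((iidPMF (Dz.bind fun z => A z r) n).bind
      (expMech (H r) (ε / 2))) goodᶜ ≤ ENNReal.ofReal (β / 3) := by
    rintro r ⟨hrgood, hrstable⟩
    rw [Set.mem_ofPred_eq, Set.ofPred_eq_eq_singleton, pr_singleton] at hrstable
    have hmem : hr r ∈ H r := by
      have hpos : (Dz.bind fun z => A z r) (hr r) ≠ 0 :=
        (lt_of_lt_of_le (by norm_num) hrstable).ne'
      obtain ⟨z, -, hz⟩ := (PMF.mem_support_bind_iff _ _ _).1 ((PMF.mem_support_iff _ _).2 hpos)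
      exact hsupp r z _ hz
    calc _ ≤ pr ((iidPMF (Dz.bind fun z => A z r) n).bind (expMech (H r) (ε / 2))) {hr r}ᶜ :=
          pr_mono _ (Set.compl_subset_compl.2 (Set.singleton_subset_iff.2 hrgood))
      _ ≤ _ := pr_iidPMF_bind_expMech_compl_le _ hmem hrstable (by linarith [hε.1]) n
      _ ≤ ENNReal.ofReal (β / 3) := ENNReal.ofReal_le_ofReal
          (pow_add_mul_exp_neg_le hβ0 (by linarith) hd hε.2.le (hcard r) hn)
  calc _ ≤ pr ρ Gᶜ + ENNReal.ofReal (β / 3) := pr_bind_le_add fun r hr => hgood r (not_not.1 hr)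
    _ ≤ ENNReal.ofReal (β / 3) + ENNReal.ofReal (β / 3) + ENNReal.ofReal (β / 3) := by gcongr
    _ = ENNReal.ofReal β := by
        rw [← ENNReal.ofReal_add (by positivity) (by positivity),
          ← ENNReal.ofReal_add (by positivity) (by positivity)]
        ring_nf

end VoteMech

/-- from a pseudo-globally stable learner whose outputs lie in a class of
size at most `2^d` determined by the public randomness, to an ε-DP user-level learner in
the central model with `⌈K·(d + log(1/β))/ε⌉` users. -/
theorem stmt15 :
    ∃ K : ℝ, 0 < K ∧
      ∀ (X : Type) [Fintype X] (C : Set (X → Bool)) (α β d : ℝ),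
        α ∈ Set.Ioo (0 : ℝ) 0.1 → β ∈ Set.Ioo (0 : ℝ) 0.1 → 0 ≤ d →
        ∀ (m : ℕ) (R : Type) (ρ : PMF R) (A : (Fin m → X × Bool) → R → PMF (X → Bool)),
          PGStable m α (β / 3) 0.9 (1 - β / 3) C ρ A →
          (∃ Hfam : R → Finset (X → Bool), ∀ r : R,
            ((Hfam r).card : ℝ) ≤ 2 ^ d ∧
            ∀ S : Fin m → X × Bool, ∀ h ∈ (A S r).support, h ∈ Hfam r) →
          ∀ ε : ℝ, ε ∈ Set.Ioo (0 : ℝ) 1 →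
          ∀ n : ℕ, n = ⌈K * (d + Real.log (1 / β)) / ε⌉₊ →
          ∃ M : (Fin n → Fin m → X × Bool) → PMF (X → Bool),
            DPfn M ε 0 ∧
            ∀ D : PMF (X × Bool), Realizable C D →
              pr ((iidPMF (iidPMF D m) n).bind M)
                  {h | errD D h ≤ ENNReal.ofReal α} ≥ ENNReal.ofReal (1 - β) := by
  refine ⟨20, by norm_num, ?_⟩
  rintro X _ C α β d - hβ hd m R ρ A hA ⟨H, hH⟩ ε hε n rfl
  classical
  refine ⟨voteMech ρ A H ε, dpfn_voteMech ρ A H hε.1.le, fun D hD => ?_⟩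
  obtain ⟨hr, hacc, hstab⟩ := hA D hD
  have hn : 20 * (d + Real.log (1 / β)) ≤ ε * ⌈20 * (d + Real.log (1 / β)) / ε⌉₊ :=
    (div_le_iff₀' hε.1).1 (Nat.le_ceil _)
  exact le_pr_iidPMF_bind_voteMech (iidPMF D m) hβ hd hε hn (fun r => (hH r).1)
    (fun r => (hH r).2) hacc hstab

end
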